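/- arXiv:2403.08522 — 2 statements merged into one kernel-verified Lean document; each statement's English description precedes it below -/
import Mathlib

section
/- Let α be a finite alphabet with cardinality a ≥ 2, and let (V, δ, 𝔰) be a deterministic partial automaton over α. Fix d ∈ (0,1) and a real number λ with λ > a^(−d). Assume: (i) every state reachable from 𝔰 (every t with reach 𝔰 w = some t for some word w) has out-degree at least 1; and (ii) there exists K such that every word w accepted from 𝔰 with w.length ≥ K satisfies: reach 𝔰 w = some t with out-degree of t at least λ·a. Then there exist a real d' > 1 − d and c > 0 such that for every L ∈ ℕ, the number of words of length L accepted from 𝔰 is at least c·a^(d'·L); in particular the accepted language has A-density d' for every infinite A ⊆ ℕ. -/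
/-- The run map of a deterministic partial automaton. -/
def reach {V α : Type*} (δ : V → α → Option V) : V → List α → Option V
  | v, [] => some v
  | v, x :: w => (δ v x).bind fun u => reach δ u w

/-- The out-degree of a state `v`: the number of letters on which a transition
from `v` is defined. -/
noncomputable def outDeg {V α : Type*} [Fintype α] (δ : V → α → Option V) (v : V) : ℕ :=
  open Classical in (Finset.univ.filter fun x : α => δ v x ≠ none).card

/-- The number of words of length `L` in the language `𝓛` (words of length `L`
identified with functions `Fin L → α`). -/
noncomputable def langCount {α : Type*} [Fintype α] (𝓛 : Set (List α)) (L : ℕ) : ℕ :=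
  open Classical in
  (Finset.univ.filter fun f : Fin L → α => List.ofFn f ∈ 𝓛).card

/-- A language `𝓛` over the finite alphabet `α` has `A`-density `d` if for some
`c > 0`, `𝓛` contains at least `c·|α|^(d·L)` words of length `L` for each `L ∈ A`. -/
def HasADensity {α : Type*} [Fintype α] (A : Set ℕ) (d : ℝ) (𝓛 : Set (List α)) : Prop :=
  ∃ c : ℝ, 0 < c ∧ ∀ L ∈ A,
    c * (Fintype.card α : ℝ) ^ (d * (L : ℝ)) ≤ (langCount 𝓛 L : ℝ)

/-! Every accepted word reaching the state `t` has exactly `outDeg δ t` accepted one-letter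
extensions. So the number of accepted words of length `L` never decreases, and from length `K`
on it is multiplied at each step by at least `b = ⌈λa⌉₊ > a^(1-d)`. This gives at least
`b^(L-K) = b^(-K) · a^(d'L)` accepted words of length `L`, where `d' = log_a b > 1 - d`. -/

section Automaton

variable {α V : Type*} (δ : V → α → Option V)

lemma reach_append (v : V) (w w' : List α) :
    reach δ v (w ++ w') = (reach δ v w).bind (reach δ · w') := by
  induction w generalizing v with
  | nil => rfl
  | cons x w ih => simp only [List.cons_append, reach, ih, Option.bind_assoc]

lemma reach_concat (v : V) (w : List α) (x : α) :
    reach δ v (w ++ [x]) = (reach δ v w).bind (δ · x) := by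
  simp [reach_append, reach]

lemma List.ofFn_snoc {L : ℕ} (f : Fin L → α) (x : α) :
    List.ofFn (Fin.snoc f x) = List.ofFn f ++ [x] := by
  rw [List.ofFn_succ']
  simp [List.concat_eq_append]

variable [Fintype α]

open Classical in
lemma langCount_eq_sum (𝓛 : Set (List α)) (L : ℕ) :
    langCount 𝓛 L = ∑ f : Fin L → α, if List.ofFn f ∈ 𝓛 then 1 else 0 :=
  Finset.card_filter _ _

open Classical in
lemma outDeg_eq_sum (v : V) : outDeg δ v = ∑ x : α, if δ v x ≠ none then 1 else 0 :=
  Finset.card_filter _ _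

lemma mul_langCount_le_langCount_succ (v : V) {b L : ℕ}
    (hdeg : ∀ (f : Fin L → α) t, reach δ v (List.ofFn f) = some t → b ≤ outDeg δ t) :
    b * langCount {w | reach δ v w ≠ none} L ≤ langCount {w | reach δ v w ≠ none} (L + 1) := by
  classical
  have hsplit : langCount {w | reach δ v w ≠ none} (L + 1) =
      ∑ f : Fin L → α, ∑ x : α, if reach δ v (List.ofFn f ++ [x]) ≠ none then 1 else 0 := by
    rw [langCount_eq_sum, ← (Fin.snocEquiv fun _ => α).sum_comp, Fintype.sum_prod_type_right]
    simp only [Fin.snocEquiv, Equiv.coe_fn_mk, List.ofFn_snoc, Set.mem_ofPred_eq]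
  rw [hsplit, langCount_eq_sum, Finset.mul_sum]
  gcongr with f
  cases ht : reach δ v (List.ofFn f) with
  | none => simp [ht]
  | some t => simpa [reach_concat, ht, outDeg_eq_sum] using hdeg f t ht

lemma one_le_langCount (v : V) (hdeg : ∀ w t, reach δ v w = some t → 1 ≤ outDeg δ t) (L : ℕ) :
    1 ≤ langCount {w | reach δ v w ≠ none} L := by
  induction L with
  | zero => classical simp [langCount_eq_sum, reach]
  | succ L ih =>
    exact ih.trans ((one_mul _).symm.trans_le
      (mul_langCount_le_langCount_succ δ v fun f t ht => hdeg _ t ht))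

lemma pow_tsub_le_langCount (v : V) {b K : ℕ}
    (hdeg : ∀ w t, reach δ v w = some t → 1 ≤ outDeg δ t)
    (hlarge : ∀ w t, K ≤ w.length → reach δ v w = some t → b ≤ outDeg δ t) (L : ℕ) :
    b ^ (L - K) ≤ langCount {w | reach δ v w ≠ none} L := by
  induction L with
  | zero => simpa using one_le_langCount δ v hdeg 0
  | succ L ih =>
    rcases Nat.lt_or_ge L K with hLK | hKL
    · simpa [Nat.sub_eq_zero_of_le hLK] using one_le_langCount δ v hdeg (L + 1)
    · rw [Nat.sub_add_comm hKL, pow_succ']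
      exact (Nat.mul_le_mul_left b ih).trans
        (mul_langCount_le_langCount_succ δ v fun f t ht => hlarge _ t (by simpa using hKL) ht)

end Automaton

lemma Real.rpow_natCast_sub_le_pow_tsub {b : ℝ} (hb : 1 ≤ b) (L K : ℕ) :
    b ^ ((L : ℝ) - K) ≤ b ^ (L - K) := by
  rw [← Real.rpow_natCast]
  refine Real.rpow_le_rpow_of_exponent_le hb ?_
  rcases le_total K L with hKL | hLK
  · rw [Nat.cast_sub hKL]
  · rw [Nat.sub_eq_zero_of_le hLK]
    simpa using hLK

theorem stmt7_general {α V : Type*} [Fintype α] (a : ℕ) (hcard : Fintype.card α = a)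
    (ha : 2 ≤ a) (δ : V → α → Option V) (𝔰 : V) (d lam : ℝ)
    (hlam : (a : ℝ) ^ (-d) < lam)
    (hreach : ∀ (w : List α) (t : V), reach δ 𝔰 w = some t → 1 ≤ outDeg δ t)
    (hlarge : ∃ K : ℕ, ∀ (w : List α) (t : V), K ≤ w.length →
      reach δ 𝔰 w = some t → lam * a ≤ (outDeg δ t : ℝ)) :
    ∃ d' : ℝ, 1 - d < d' ∧ ∃ c : ℝ, 0 < c ∧
      (∀ L : ℕ, c * (a : ℝ) ^ (d' * (L : ℝ)) ≤
        (langCount {w : List α | reach δ 𝔰 w ≠ none} L : ℝ)) ∧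
      (∀ A : Set ℕ, A.Infinite →
        HasADensity A d' {w : List α | reach δ 𝔰 w ≠ none}) := by
  obtain ⟨K, hK⟩ := hlarge
  have ha1 : (1 : ℝ) < a := by exact_mod_cast ha
  have ha0 : (0 : ℝ) < a := by positivity
  set b : ℕ := ⌈lam * a⌉₊
  have hab : (a : ℝ) ^ (1 - d) < b := calc
    (a : ℝ) ^ (1 - d) = (a : ℝ) ^ (-d) * a := by
      rw [sub_eq_neg_add, Real.rpow_add ha0, Real.rpow_one]
    _ < lam * a := mul_lt_mul_of_pos_right hlam ha0
    _ ≤ b := Nat.le_ceil _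
  have hb0 : (0 : ℝ) < b := (Real.rpow_pos_of_pos ha0 _).trans hab
  have hb1 : (1 : ℝ) ≤ b := by exact_mod_cast Nat.cast_pos.mp hb0
  have hbound : ∀ L : ℕ, (b : ℝ) ^ (-(K : ℝ)) * (a : ℝ) ^ (Real.logb a b * L) ≤
      langCount {w : List α | reach δ 𝔰 w ≠ none} L := fun L => calc
    (b : ℝ) ^ (-(K : ℝ)) * (a : ℝ) ^ (Real.logb a b * L) = (b : ℝ) ^ ((L : ℝ) - K) := by
      rw [Real.rpow_mul ha0.le, Real.rpow_logb ha0 ha1.ne' hb0, ← Real.rpow_add hb0,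
        neg_add_eq_sub]
    _ ≤ (b : ℝ) ^ (L - K) := Real.rpow_natCast_sub_le_pow_tsub hb1 L K
    _ ≤ langCount {w : List α | reach δ 𝔰 w ≠ none} L := by
      exact_mod_cast pow_tsub_le_langCount δ 𝔰 hreach
        (fun w t hw ht => Nat.ceil_le.mpr (hK w t hw ht)) L
  have hc : 0 < (b : ℝ) ^ (-(K : ℝ)) := Real.rpow_pos_of_pos hb0 _
  refine ⟨_, (Real.lt_logb_iff_rpow_lt ha1 hb0).mpr hab, _, hc, hbound,
    fun A _ => ⟨_, hc, fun L _ => ?_⟩⟩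
  rw [hcard]
  exact hbound L

/-- an automaton over an alphabet of size `a ≥ 2` in which every
reachable state has out-degree `≥ 1` and, eventually (for words of length `≥ K`),
out-degree `≥ λ·a` with `λ > a^(−d)`, has accepted language (counted by length)
of size at least `c·a^(d'·L)` for some `d' > 1 − d` and `c > 0`; in particular the
accepted language has `A`-density `d'` for every infinite `A ⊆ ℕ`. -/
theorem stmt7 {α V : Type*} [Fintype α] (a : ℕ) (hcard : Fintype.card α = a)
    (ha : 2 ≤ a) (δ : V → α → Option V) (𝔰 : V) (d lam : ℝ)
    (hd : d ∈ Set.Ioo (0 : ℝ) 1) (hlam : (a : ℝ) ^ (-d) < lam)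
    (hreach : ∀ (w : List α) (t : V), reach δ 𝔰 w = some t → 1 ≤ outDeg δ t)
    (hlarge : ∃ K : ℕ, ∀ (w : List α) (t : V), K ≤ w.length →
      reach δ 𝔰 w = some t → lam * a ≤ (outDeg δ t : ℝ)) :
    ∃ d' : ℝ, 1 - d < d' ∧ ∃ c : ℝ, 0 < c ∧
      (∀ L : ℕ, c * (a : ℝ) ^ (d' * (L : ℝ)) ≤
        (langCount {w : List α | reach δ 𝔰 w ≠ none} L : ℝ)) ∧
      (∀ A : Set ℕ, A.Infinite →
        HasADensity A d' {w : List α | reach δ 𝔰 w ≠ none}) :=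
  stmt7_general a hcard ha δ 𝔰 d lam hlam hreach hlarge
end

section
/- Let a ≥ 2 and m ≥ 1 be natural numbers, d ∈ (0,1), and let λ be a real number with λ > a^(−m·d). Let B be a finite type and enc : B → List (Fin a) an injective map all of whose values have length m; extend enc to a map Enc on words over B by concatenation, Enc([b₁, …, b_ℓ]) = enc(b₁) ++ ⋯ ++ enc(b_ℓ). Suppose 𝓛̂ is a set of words over B such that for some c > 0 and every ℓ ∈ ℕ, 𝓛̂ contains at least c·(λ·a^m)^ℓ words of length ℓ. Then there exist a real d'' > 1 − d and c' > 0 such that for every L divisible by m, the image Enc '' 𝓛̂ contains at least c'·a^(d''·L) words of length L over Fin a; i.e., Enc '' 𝓛̂ has A_0(m)-density d''. -/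
/-!
Since `enc` is injective with codewords of the common positive length `m`, concatenation is
injective (fixed-length codes are uniquely decodable) and maps words of length `ℓ` to words
of length `m ℓ`. Hence the image has at least `c (λ a^m)^ℓ = c a^(d'' m ℓ)` words of length `m ℓ`,
where `d'' = log_a (λ a^m) / m`, and `λ > a^(-m d)` is exactly `d'' > 1 - d`.
-/

open InformationTheory

theorem langCount_eq_ncard {α : Type*} [Fintype α] (𝓛 : Set (List α)) (L : ℕ) :
    langCount 𝓛 L = {w ∈ 𝓛 | w.length = L}.ncard := by
  classical
  rw [langCount, ← Set.ncard_coe_finset, ← Set.ncard_image_of_injective _ List.ofFn_injective]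
  congr 1
  ext w
  simp only [Finset.coe_filter, Finset.mem_univ, true_and, Set.mem_image, Set.mem_ofPred_eq]
  constructor
  · rintro ⟨f, hf, rfl⟩
    exact ⟨hf, List.length_ofFn⟩
  · rintro ⟨hw, rfl⟩
    exact ⟨w.get, by rwa [List.ofFn_get], List.ofFn_get w⟩

theorem langCount_le_langCount_image {α β : Type*} [Fintype α] [Fintype β]
    {f : List α → List β} (hf : Function.Injective f) (𝓛 : Set (List α)) {ℓ L : ℕ}
    (hlen : ∀ w : List α, w.length = ℓ → (f w).length = L) :
    langCount 𝓛 ℓ ≤ langCount (f '' 𝓛) L := by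
  rw [langCount_eq_ncard, langCount_eq_ncard]
  refine Set.ncard_le_ncard_of_injOn f ?_ hf.injOn
    ((List.finite_length_eq β L).subset fun _ h => h.2)
  rintro w ⟨hw, rfl⟩
  exact ⟨Set.mem_image_of_mem f hw, hlen w rfl⟩

theorem uniquelyDecodable_setOf_length_eq {α : Type*} {m : ℕ} (hm : 0 < m) :
    UniquelyDecodable {w : List α | w.length = m} := by
  intro L₁ L₂ h₁ h₂ h
  induction L₁ generalizing L₂ with
  | nil =>
    cases L₂ with
    | nil => rfl
    | cons w L₂ =>
      have hw : w.length = m := h₂ w List.mem_cons_self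
      simp_all [eq_comm (a := [])]
  | cons v L₁ ih =>
    cases L₂ with
    | nil =>
      have hv : v.length = m := h₁ v List.mem_cons_self
      simp_all
    | cons w L₂ =>
      have hvw : v.length = w.length :=
        (h₁ v List.mem_cons_self).trans (h₂ w List.mem_cons_self).symm
      obtain ⟨rfl, hrest⟩ := List.append_inj h hvw
      rw [ih L₂ (fun u hu => h₁ u (List.mem_cons_of_mem v hu))
        (fun u hu => h₂ u (List.mem_cons_of_mem v hu)) hrest]

theorem injective_flatten_map {α B : Type*} {enc : B → List α} (henc : Function.Injective enc)
    {m : ℕ} (hm : 0 < m) (hlen : ∀ b, (enc b).length = m) :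
    Function.Injective fun l : List B => (l.map enc).flatten := fun l₁ l₂ h =>
  List.map_injective_iff.2 henc <| uniquelyDecodable_setOf_length_eq hm _ _
    (by simp [hlen]) (by simp [hlen]) h

theorem length_flatten_map {α B : Type*} {enc : B → List α} {m : ℕ}
    (hlen : ∀ b, (enc b).length = m) (l : List B) :
    (l.map enc).flatten.length = m * l.length := by
  simp [List.length_flatten, Function.comp_def, hlen, mul_comm]

theorem rpow_logb_div_mul_mul {a x : ℝ} (ha₀ : 0 < a) (ha₁ : a ≠ 1) (hx : 0 < x) {m : ℝ}
    (hm : m ≠ 0) (ℓ : ℕ) : a ^ (Real.logb a x / m * (m * ℓ)) = x ^ ℓ := by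
  rw [← mul_assoc, div_mul_cancel₀ _ hm, Real.rpow_mul ha₀.le, Real.rpow_logb ha₀ ha₁ hx,
    Real.rpow_natCast]

theorem one_sub_lt_logb_mul_pow_div {a lam d : ℝ} {m : ℕ} (ha : 1 < a) (hm : 0 < m)
    (hlam : a ^ (-(m * d)) < lam) : 1 - d < Real.logb a (lam * a ^ m) / m := by
  have ha₀ : 0 < a := by linarith
  have hm' : (0 : ℝ) < m := by exact_mod_cast hm
  rw [lt_div_iff₀ hm', Real.lt_logb_iff_rpow_lt ha
    (mul_pos ((Real.rpow_pos_of_pos ha₀ _).trans hlam) (pow_pos ha₀ m))]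
  calc a ^ ((1 - d) * m) = a ^ (-(m * d)) * a ^ m := by
        rw [← Real.rpow_natCast a m, ← Real.rpow_add ha₀]; ring_nf
    _ < lam * a ^ m := by gcongr

theorem stmt10_general (a m : ℕ) (ha : 2 ≤ a) (hm : 1 ≤ m)
    (d : ℝ)
    (lam : ℝ) (hlam : (a : ℝ) ^ (-((m : ℝ) * d)) < lam)
    (B : Type*) [Fintype B] (enc : B → List (Fin a))
    (henc : Function.Injective enc) (hlen : ∀ b : B, (enc b).length = m)
    (𝓛 : Set (List B)) (c : ℝ) (hc : 0 < c)
    (hgrow : ∀ ℓ : ℕ, c * (lam * (a : ℝ) ^ (m : ℕ)) ^ ℓ ≤ (langCount 𝓛 ℓ : ℝ)) :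
    ∃ d'' : ℝ, 1 - d < d'' ∧
      HasADensity {L : ℕ | m ∣ L} d''
        ((fun l : List B => (l.map enc).flatten) '' 𝓛) := by
  have ha₁ : (1 : ℝ) < a := by exact_mod_cast ha
  have hlam₀ : 0 < lam * (a : ℝ) ^ m :=
    mul_pos ((Real.rpow_pos_of_pos (by linarith) _).trans hlam) (by positivity)
  refine ⟨Real.logb a (lam * (a : ℝ) ^ m) / m, one_sub_lt_logb_mul_pow_div ha₁ hm hlam,
    c, hc, ?_⟩
  rintro _ ⟨ℓ, rfl⟩
  rw [Fintype.card_fin, Nat.cast_mul,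
    rpow_logb_div_mul_mul (by linarith) ha₁.ne' hlam₀ (by positivity)]
  refine (hgrow ℓ).trans ?_
  exact_mod_cast langCount_le_langCount_image (injective_flatten_map henc hm hlen) 𝓛
    fun w hw => by rw [length_flatten_map hlen, hw]

/-- block recoding. Let `enc : B → List (Fin a)` be injective with
all values of length `m`, extended to words over `B` by concatenation. If `𝓛̂`
contains at least `c·(λ·a^m)^ℓ` words of length `ℓ` for every `ℓ` (for some
`c > 0`), where `λ > a^(−m·d)`, then the image language over `Fin a` has
`A_0(m)`-density `d''` for some `d'' > 1 − d`. -/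
theorem stmt10 (a m : ℕ) (ha : 2 ≤ a) (hm : 1 ≤ m)
    (d : ℝ) (hd : d ∈ Set.Ioo (0 : ℝ) 1)
    (lam : ℝ) (hlam : (a : ℝ) ^ (-((m : ℝ) * d)) < lam)
    (B : Type*) [Fintype B] (enc : B → List (Fin a))
    (henc : Function.Injective enc) (hlen : ∀ b : B, (enc b).length = m)
    (𝓛 : Set (List B)) (c : ℝ) (hc : 0 < c)
    (hgrow : ∀ ℓ : ℕ, c * (lam * (a : ℝ) ^ (m : ℕ)) ^ ℓ ≤ (langCount 𝓛 ℓ : ℝ)) :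
    ∃ d'' : ℝ, 1 - d < d'' ∧
      HasADensity {L : ℕ | m ∣ L} d''
        ((fun l : List B => (l.map enc).flatten) '' 𝓛) :=
  stmt10_general a m ha hm d lam hlam B enc henc hlen 𝓛 c hc hgrow
end
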